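/- arXiv:2011.06366 — 2 statements merged into one kernel-verified Lean document; each statement's English description precedes it below -/
import Mathlib

section
/- Convex-duality defect controls the distance between approximations of the diffusion matrix: let d ≥ 1 be an integer and Λ ∈ [1,∞). There exists a constant C < ∞ depending only on d and Λ with the following property. Let A, B, ã be symmetric d×d real matrices such that for all ξ ∈ ℝ^d: |ξ|^2 ≤ ξ·Bξ ≤ ξ·Aξ ≤ Λ|ξ|^2 and |ξ|^2 ≤ ξ·ãξ ≤ Λ|ξ|^2. Define J(p,q) := ½ p·Ap + ½ q·B^{−1}q − p·q for p, q ∈ ℝ^d. Then J(p, ãp) ≥ 0 for every p, and ‖ã − A‖ + ‖ã − B‖ ≤ C · sup_{|p| ≤ 1} (J(p, ãp))^{1/2}, where ‖M‖ := sup_{|p| ≤ 1} |Mp| is the operator norm. -/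
/-!
Completing the square in `q` gives `J(p, q) = ½ (q - Bp)·B⁻¹(q - Bp) + ½ p·(A - B)p`, a sum of
two nonnegative terms. Since `B ≤ Λ`, the first term dominates `|q - Bp|² / (2Λ)`; since
`0 ≤ A - B ≤ Λ`, the second dominates `|(A - B)p|² / (2Λ)`, and `q - Ap = (q - Bp) - (A - B)p`
bounds `|q - Ap|`. Put `q = ãp` and take the supremum over the unit ball, which is finite because
`p ↦ J(p, ãp)` is continuous.
-/

open Matrix

noncomputable section

/-- The operator norm `‖M‖ = sup_{|p| ≤ 1} |Mp|` of a matrix, written with Euclidean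
norms expressed through dot products. -/
def matNorm {d : ℕ} (M : Matrix (Fin d) (Fin d) ℝ) : ℝ :=
  ⨆ p : {p : Fin d → ℝ // p ⬝ᵥ p ≤ 1}, Real.sqrt (M.mulVec p.1 ⬝ᵥ M.mulVec p.1)

/-- The duality defect `J(p,q) = ½ p·Ap + ½ q·B⁻¹q − p·q`. -/
def Jmat {d : ℕ} (A B : Matrix (Fin d) (Fin d) ℝ) (p q : Fin d → ℝ) : ℝ :=
  (1 / 2) * (p ⬝ᵥ A.mulVec p) + (1 / 2) * (q ⬝ᵥ B⁻¹.mulVec q) - p ⬝ᵥ q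

namespace Matrix

variable {n : Type*} [Fintype n]

section OrderedRing

variable {R : Type*} [CommRing R] [LinearOrder R] [IsStrictOrderedRing R]

lemma dotProduct_self_nonneg (x : n → R) : 0 ≤ x ⬝ᵥ x :=
  Finset.sum_nonneg fun i _ => mul_self_nonneg (x i)

lemma dotProduct_sub_sub_le (u v : n → R) :
    (u - v) ⬝ᵥ (u - v) ≤ 2 * (u ⬝ᵥ u) + 2 * (v ⬝ᵥ v) := by
  have h := dotProduct_self_nonneg (u + v)
  simp only [dotProduct_add, add_dotProduct, dotProduct_sub, sub_dotProduct,
    dotProduct_comm v u] at h ⊢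
  linarith

end OrderedRing

namespace IsSymm

variable {M : Matrix n n ℝ}

lemma dotProduct_mulVec_comm (hM : M.IsSymm) (x y : n → ℝ) :
    x ⬝ᵥ M *ᵥ y = M *ᵥ x ⬝ᵥ y := by
  rw [dotProduct_mulVec, ← mulVec_transpose, hM.eq]

lemma sq_dotProduct_mulVec_le (hM : M.IsSymm) (hpsd : ∀ x, 0 ≤ x ⬝ᵥ M *ᵥ x) (x y : n → ℝ) :
    (x ⬝ᵥ M *ᵥ y) ^ 2 ≤ (x ⬝ᵥ M *ᵥ x) * (y ⬝ᵥ M *ᵥ y) := by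
  have hquad : ∀ t : ℝ, 0 ≤ (y ⬝ᵥ M *ᵥ y) * (t * t) + 2 * (x ⬝ᵥ M *ᵥ y) * t
      + x ⬝ᵥ M *ᵥ x := fun t => by
    have h := hpsd (x + t • y)
    simp only [mulVec_add, mulVec_smul, dotProduct_add, add_dotProduct, dotProduct_smul,
      smul_dotProduct, smul_eq_mul] at h
    rw [hM.dotProduct_mulVec_comm y x, dotProduct_comm (M *ᵥ y) x] at h
    nlinarith [h]
  have hdisc := discrim_le_zero hquad
  rw [discrim] at hdisc
  linarith

lemma mulVec_dotProduct_mulVec_le (hM : M.IsSymm) (hpsd : ∀ x, 0 ≤ x ⬝ᵥ M *ᵥ x) {Λ : ℝ}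
    (hle : ∀ x, x ⬝ᵥ M *ᵥ x ≤ Λ * (x ⬝ᵥ x)) (p : n → ℝ) :
    M *ᵥ p ⬝ᵥ M *ᵥ p ≤ Λ * (p ⬝ᵥ M *ᵥ p) := by
  have hcs := hM.sq_dotProduct_mulVec_le hpsd p (M *ᵥ p)
  rw [hM.dotProduct_mulVec_comm p] at hcs
  have hs := dotProduct_self_nonneg (M *ᵥ p)
  have hΛs := mul_le_mul_of_nonneg_left (hle (M *ᵥ p)) (hpsd p)
  rcases hs.eq_or_lt with hs0 | hspos
  · rw [← hs0]
    rcases (hpsd p).eq_or_lt with h0 | hpos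
    · rw [← h0, mul_zero]
    · nlinarith [hle p, dotProduct_self_nonneg p]
  · nlinarith

lemma isUnit_det_of_dotProduct_self_le [DecidableEq n] (hM : M.IsSymm)
    (hge : ∀ x, x ⬝ᵥ x ≤ x ⬝ᵥ M *ᵥ x) : IsUnit M.det := by
  refine (PosDef.of_dotProduct_mulVec_pos hM fun x hx => ?_).det_pos.ne'.isUnit
  simpa using (dotProduct_self_star_pos_iff.mpr hx).trans_le (hge x)

lemma dotProduct_self_le_mul_dotProduct_inv_mulVec [DecidableEq n] (hM : M.IsSymm)
    (hu : IsUnit M.det) (hpsd : ∀ x, 0 ≤ x ⬝ᵥ M *ᵥ x) {Λ : ℝ}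
    (hle : ∀ x, x ⬝ᵥ M *ᵥ x ≤ Λ * (x ⬝ᵥ x))
    (x : n → ℝ) : x ⬝ᵥ x ≤ Λ * (x ⬝ᵥ M⁻¹ *ᵥ x) := by
  have hx : M *ᵥ M⁻¹ *ᵥ x = x := by rw [mulVec_mulVec, mul_nonsing_inv M hu, one_mulVec]
  simpa [hx, dotProduct_comm x] using hM.mulVec_dotProduct_mulVec_le hpsd hle (M⁻¹ *ᵥ x)

end IsSymm

lemma dotProduct_inv_mulVec_nonneg [DecidableEq n] {M : Matrix n n ℝ} (hu : IsUnit M.det)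
    (hpsd : ∀ x, 0 ≤ x ⬝ᵥ M *ᵥ x) (x : n → ℝ) : 0 ≤ x ⬝ᵥ M⁻¹ *ᵥ x := by
  have hx : M *ᵥ M⁻¹ *ᵥ x = x := by rw [mulVec_mulVec, mul_nonsing_inv M hu, one_mulVec]
  simpa [hx, dotProduct_comm x] using hpsd (M⁻¹ *ᵥ x)

end Matrix

section Defect

variable {d : ℕ} {A B : Matrix (Fin d) (Fin d) ℝ} {Λ : ℝ}

lemma Jmat_eq_half_add_half (hB : B.IsSymm) (hu : IsUnit B.det)
    (p q : Fin d → ℝ) :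
    Jmat A B p q = (1 / 2) * ((q - B *ᵥ p) ⬝ᵥ B⁻¹ *ᵥ (q - B *ᵥ p))
      + (1 / 2) * (p ⬝ᵥ (A - B) *ᵥ p) := by
  have hp : B⁻¹ *ᵥ B *ᵥ p = p := by rw [mulVec_mulVec, nonsing_inv_mul B hu, one_mulVec]
  have hinv : B⁻¹.IsSymm := by rw [IsSymm, transpose_nonsing_inv, hB.eq]
  simp only [Jmat, mulVec_sub, sub_mulVec, dotProduct_sub, sub_dotProduct, hp,
    hinv.dotProduct_mulVec_comm (B *ᵥ p), dotProduct_comm (B *ᵥ p) p, dotProduct_comm q p]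
  ring

lemma Jmat_nonneg (hB : B.IsSymm) (hB1 : ∀ ξ, ξ ⬝ᵥ ξ ≤ ξ ⬝ᵥ B *ᵥ ξ)
    (hBA : ∀ ξ, ξ ⬝ᵥ B *ᵥ ξ ≤ ξ ⬝ᵥ A *ᵥ ξ) (p q : Fin d → ℝ) : 0 ≤ Jmat A B p q := by
  have hu := hB.isUnit_det_of_dotProduct_self_le hB1
  have hpsd : ∀ ξ, 0 ≤ ξ ⬝ᵥ B *ᵥ ξ := fun ξ => (dotProduct_self_nonneg ξ).trans (hB1 ξ)
  have hAB : 0 ≤ p ⬝ᵥ (A - B) *ᵥ p := by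
    simpa [sub_mulVec, dotProduct_sub] using hBA p
  rw [Jmat_eq_half_add_half hB hu]
  linarith [dotProduct_inv_mulVec_nonneg hu hpsd (q - B *ᵥ p)]

lemma dotProduct_self_sub_mulVec_right_le_Jmat (hB : B.IsSymm)
    (hB1 : ∀ ξ, ξ ⬝ᵥ ξ ≤ ξ ⬝ᵥ B *ᵥ ξ) (hBA : ∀ ξ, ξ ⬝ᵥ B *ᵥ ξ ≤ ξ ⬝ᵥ A *ᵥ ξ)
    (hBΛ : ∀ ξ, ξ ⬝ᵥ B *ᵥ ξ ≤ Λ * (ξ ⬝ᵥ ξ)) (hΛ : 0 ≤ Λ) (p q : Fin d → ℝ) :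
    (q - B *ᵥ p) ⬝ᵥ (q - B *ᵥ p) ≤ 2 * Λ * Jmat A B p q := by
  have hu := hB.isUnit_det_of_dotProduct_self_le hB1
  have hpsd : ∀ ξ, 0 ≤ ξ ⬝ᵥ B *ᵥ ξ := fun ξ => (dotProduct_self_nonneg ξ).trans (hB1 ξ)
  have hAB : 0 ≤ p ⬝ᵥ (A - B) *ᵥ p := by
    simpa [sub_mulVec, dotProduct_sub] using hBA p
  have hinv := hB.dotProduct_self_le_mul_dotProduct_inv_mulVec hu hpsd hBΛ (q - B *ᵥ p)
  rw [Jmat_eq_half_add_half hB hu]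
  nlinarith

lemma dotProduct_self_sub_mulVec_sub_le_Jmat (hA : A.IsSymm) (hB : B.IsSymm)
    (hB1 : ∀ ξ, ξ ⬝ᵥ ξ ≤ ξ ⬝ᵥ B *ᵥ ξ) (hBA : ∀ ξ, ξ ⬝ᵥ B *ᵥ ξ ≤ ξ ⬝ᵥ A *ᵥ ξ)
    (hAΛ : ∀ ξ, ξ ⬝ᵥ A *ᵥ ξ ≤ Λ * (ξ ⬝ᵥ ξ)) (hΛ : 0 ≤ Λ) (p q : Fin d → ℝ) :
    (A - B) *ᵥ p ⬝ᵥ (A - B) *ᵥ p ≤ 2 * Λ * Jmat A B p q := by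
  have hu := hB.isUnit_det_of_dotProduct_self_le hB1
  have hpsd : ∀ ξ, 0 ≤ ξ ⬝ᵥ B *ᵥ ξ := fun ξ => (dotProduct_self_nonneg ξ).trans (hB1 ξ)
  have hAB : ∀ ξ, 0 ≤ ξ ⬝ᵥ (A - B) *ᵥ ξ := fun ξ => by
    simpa [sub_mulVec, dotProduct_sub] using hBA ξ
  have hABΛ : ∀ ξ, ξ ⬝ᵥ (A - B) *ᵥ ξ ≤ Λ * (ξ ⬝ᵥ ξ) := fun ξ => by
    simp only [sub_mulVec, dotProduct_sub]
    linarith [hAΛ ξ, hpsd ξ]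
  have hsq := (hA.sub hB).mulVec_dotProduct_mulVec_le hAB hABΛ p
  rw [Jmat_eq_half_add_half hB hu]
  nlinarith [dotProduct_inv_mulVec_nonneg hu hpsd (q - B *ᵥ p)]

lemma dotProduct_self_sub_mulVec_left_le_Jmat (hA : A.IsSymm) (hB : B.IsSymm)
    (hB1 : ∀ ξ, ξ ⬝ᵥ ξ ≤ ξ ⬝ᵥ B *ᵥ ξ) (hBA : ∀ ξ, ξ ⬝ᵥ B *ᵥ ξ ≤ ξ ⬝ᵥ A *ᵥ ξ)
    (hAΛ : ∀ ξ, ξ ⬝ᵥ A *ᵥ ξ ≤ Λ * (ξ ⬝ᵥ ξ)) (hΛ : 0 ≤ Λ) (p q : Fin d → ℝ) :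
    (q - A *ᵥ p) ⬝ᵥ (q - A *ᵥ p) ≤ 8 * Λ * Jmat A B p q := by
  have hsplit : q - A *ᵥ p = (q - B *ᵥ p) - (A - B) *ᵥ p := by rw [sub_mulVec]; abel
  rw [hsplit]
  linarith [dotProduct_sub_sub_le (q - B *ᵥ p) ((A - B) *ᵥ p),
    dotProduct_self_sub_mulVec_right_le_Jmat hB hB1 hBA (fun ξ => (hBA ξ).trans (hAΛ ξ)) hΛ p
      q,
    dotProduct_self_sub_mulVec_sub_le_Jmat hA hB hB1 hBA hAΛ hΛ p q]

end Defect

lemma isCompact_setOf_dotProduct_self_le_one {n : Type*} [Fintype n] :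
    IsCompact {p : n → ℝ | p ⬝ᵥ p ≤ 1} := by
  refine Metric.isCompact_of_isClosed_isBounded (isClosed_le (by fun_prop) continuous_const)
    (Metric.isBounded_closedBall (x := 0) (r := 1) |>.subset fun p hp => ?_)
  rw [mem_closedBall_zero_iff, pi_norm_le_iff_of_nonneg zero_le_one]
  intro i
  rw [Real.norm_eq_abs, abs_le_one_iff_mul_self_le_one]
  exact (Finset.single_le_sum (fun j _ => mul_self_nonneg (p j)) (Finset.mem_univ i)).trans hp

lemma matNorm_le_mul_iSup_sqrt {d : ℕ} {M : Matrix (Fin d) (Fin d) ℝ} {g : (Fin d → ℝ) → ℝ}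
    (hg : Continuous g) {K : ℝ} (hK : 0 ≤ K) (h : ∀ p, M *ᵥ p ⬝ᵥ M *ᵥ p ≤ K ^ 2 * g p) :
    matNorm M ≤ K * ⨆ p : {p : Fin d → ℝ // p ⬝ᵥ p ≤ 1}, √(g p.1) := by
  have hbdd : BddAbove (Set.range fun p : {p : Fin d → ℝ // p ⬝ᵥ p ≤ 1} => √(g p.1)) := by
    have := isCompact_setOf_dotProduct_self_le_one.bddAbove_image hg.sqrt.continuousOn
    rwa [Set.image_eq_range] at this
  have : Nonempty {p : Fin d → ℝ // p ⬝ᵥ p ≤ 1} := ⟨⟨0, by simp⟩⟩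
  refine ciSup_le fun p => ?_
  calc √(M *ᵥ p.1 ⬝ᵥ M *ᵥ p.1) ≤ √(K ^ 2 * g p.1) := Real.sqrt_le_sqrt (h p.1)
    _ = K * √(g p.1) := by rw [Real.sqrt_mul (sq_nonneg K), Real.sqrt_sq hK]
    _ ≤ K * ⨆ p : {p : Fin d → ℝ // p ⬝ᵥ p ≤ 1}, √(g p.1) :=
      mul_le_mul_of_nonneg_left (le_ciSup hbdd p) hK

theorem stmt_10_general (d : ℕ) (Λ : ℝ) (hΛ : 1 ≤ Λ) :
    ∃ C : ℝ, 0 ≤ C ∧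
      ∀ A B Atil : Matrix (Fin d) (Fin d) ℝ,
        A.IsSymm → B.IsSymm → Atil.IsSymm →
        (∀ ξ : Fin d → ℝ, ξ ⬝ᵥ ξ ≤ ξ ⬝ᵥ B.mulVec ξ) →
        (∀ ξ : Fin d → ℝ, ξ ⬝ᵥ B.mulVec ξ ≤ ξ ⬝ᵥ A.mulVec ξ) →
        (∀ ξ : Fin d → ℝ, ξ ⬝ᵥ A.mulVec ξ ≤ Λ * (ξ ⬝ᵥ ξ)) →
        (∀ ξ : Fin d → ℝ, ξ ⬝ᵥ ξ ≤ ξ ⬝ᵥ Atil.mulVec ξ) →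
        (∀ ξ : Fin d → ℝ, ξ ⬝ᵥ Atil.mulVec ξ ≤ Λ * (ξ ⬝ᵥ ξ)) →
        (∀ p : Fin d → ℝ, 0 ≤ Jmat A B p (Atil.mulVec p)) ∧
        matNorm (Atil - A) + matNorm (Atil - B) ≤
          C * ⨆ p : {p : Fin d → ℝ // p ⬝ᵥ p ≤ 1},
            Real.sqrt (Jmat A B p.1 (Atil.mulVec p.1)) := by
  have hΛ0 : 0 ≤ Λ := zero_le_one.trans hΛ
  refine ⟨√(8 * Λ) + √(2 * Λ), by positivity, ?_⟩
  intro A B Atil hA hB _ hB1 hBA hAΛ _ _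
  have hJ : Continuous fun p => Jmat A B p (Atil *ᵥ p) := by unfold Jmat; fun_prop
  refine ⟨fun p => Jmat_nonneg hB hB1 hBA p _, ?_⟩
  have hnormA := matNorm_le_mul_iSup_sqrt hJ (Real.sqrt_nonneg (8 * Λ)) fun p => by
    rw [sub_mulVec, Real.sq_sqrt (by positivity)]
    exact dotProduct_self_sub_mulVec_left_le_Jmat hA hB hB1 hBA hAΛ hΛ0 p _
  have hnormB := matNorm_le_mul_iSup_sqrt hJ (Real.sqrt_nonneg (2 * Λ)) fun p => by
    rw [sub_mulVec, Real.sq_sqrt (by positivity)]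
    exact dotProduct_self_sub_mulVec_right_le_Jmat hB hB1 hBA
      (fun ξ => (hBA ξ).trans (hAΛ ξ)) hΛ0 p _
  rw [add_mul]
  exact add_le_add hnormA hnormB

/-- The convex-duality defect controls the distance between the approximations of the
diffusion matrix. -/
theorem stmt_10 (d : ℕ) (hd : 1 ≤ d) (Λ : ℝ) (hΛ : 1 ≤ Λ) :
    ∃ C : ℝ, 0 ≤ C ∧
      ∀ A B Atil : Matrix (Fin d) (Fin d) ℝ,
        A.IsSymm → B.IsSymm → Atil.IsSymm →
        (∀ ξ : Fin d → ℝ, ξ ⬝ᵥ ξ ≤ ξ ⬝ᵥ B.mulVec ξ) →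
        (∀ ξ : Fin d → ℝ, ξ ⬝ᵥ B.mulVec ξ ≤ ξ ⬝ᵥ A.mulVec ξ) →
        (∀ ξ : Fin d → ℝ, ξ ⬝ᵥ A.mulVec ξ ≤ Λ * (ξ ⬝ᵥ ξ)) →
        (∀ ξ : Fin d → ℝ, ξ ⬝ᵥ ξ ≤ ξ ⬝ᵥ Atil.mulVec ξ) →
        (∀ ξ : Fin d → ℝ, ξ ⬝ᵥ Atil.mulVec ξ ≤ Λ * (ξ ⬝ᵥ ξ)) →
        (∀ p : Fin d → ℝ, 0 ≤ Jmat A B p (Atil.mulVec p)) ∧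
        matNorm (Atil - A) + matNorm (Atil - B) ≤
          C * ⨆ p : {p : Fin d → ℝ // p ⬝ᵥ p ≤ 1},
            Real.sqrt (Jmat A B p.1 (Atil.mulVec p.1)) :=
  stmt_10_general d Λ hΛ
end
end

section
/- Renormalization iteration lemma (abstract form of Section 5, Step 4): let β > 0, c > 0, and K < ∞. Suppose (F_m)_{m≥0} and (τ_m)_{m≥0} are sequences of nonnegative real numbers such that F_0 ≤ K and, for every m ∈ ℕ: (i) F_{m+1} ≤ F_m; (ii) c·τ_m ≤ F_m − F_{m+1}; (iii) F_m ≤ K·(3^{−βm} + Σ_{n=0}^m 3^{−β(m−n)} τ_n). Then there exist α > 0 and C < ∞, depending only on β, c, and K, such that F_m ≤ C·3^{−αm} for every m ∈ ℕ. -/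
/-- Renormalization iteration lemma (abstract form of Section 5, Step 4). -/
theorem stmt_12 (β c K : ℝ) (hβ : 0 < β) (hc : 0 < c)
    (F τ : ℕ → ℝ) (hF : ∀ m, 0 ≤ F m) (hτ : ∀ m, 0 ≤ τ m)
    (hF0 : F 0 ≤ K)
    (hmono : ∀ m : ℕ, F (m + 1) ≤ F m)
    (hdiff : ∀ m : ℕ, c * τ m ≤ F m - F (m + 1))
    (hbound : ∀ m : ℕ, F m ≤ K * ((3 : ℝ) ^ (-(β * (m : ℝ))) +
        ∑ n ∈ Finset.range (m + 1), (3 : ℝ) ^ (-(β * ((m : ℝ) - (n : ℝ)))) * τ n)) :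
    ∃ α C : ℝ, 0 < α ∧ 0 ≤ C ∧ ∀ m : ℕ, F m ≤ C * (3 : ℝ) ^ (-(α * (m : ℝ))) := by
  have h30 : (0:ℝ) < 3 := by norm_num
  obtain ⟨θ, hθdef⟩ : ∃ x : ℝ, x = (3:ℝ) ^ (-β) := ⟨_, rfl⟩
  have hθ0 : 0 < θ := hθdef ▸ Real.rpow_pos_of_pos h30 _
  have hθ1 : θ < 1 := hθdef ▸ Real.rpow_lt_one_of_one_lt_of_neg (by norm_num) (by linarith)
  obtain ⟨K₁, hK₁def⟩ : ∃ x : ℝ, x = max K 1 := ⟨_, rfl⟩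
  have hK₁1 : (1:ℝ) ≤ K₁ := hK₁def ▸ le_max_right _ _
  have hK₁0 : (0:ℝ) < K₁ := by linarith
  have hF0' : F 0 ≤ K₁ := hK₁def ▸ le_trans hF0 (le_max_left _ _)
  have hFanti : ∀ a b : ℕ, a ≤ b → F b ≤ F a := fun a b h =>
    antitone_nat_of_succ_le hmono h
  obtain ⟨E, hEdef⟩ : ∃ f : ℕ → ℝ, f = fun m => ∑ n ∈ Finset.range (m+1), θ^(m-n) * τ n := ⟨_, rfl⟩
  have hE0 : ∀ m, 0 ≤ E m := by
    intro m
    rw [hEdef]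
    apply Finset.sum_nonneg
    intro n _
    exact mul_nonneg (pow_nonneg hθ0.le _) (hτ n)
  have hθpow1 : ∀ k : ℕ, θ ^ k ≤ 1 := fun k => pow_le_one₀ hθ0.le hθ1.le
  -- convert hbound to nat-power form
  have hFE : ∀ m, F m ≤ K₁ * (θ^m + E m) := by
    intro m
    have h1 : (3:ℝ) ^ (-(β*(m:ℝ))) = θ^m := by
      rw [hθdef, show -(β*(m:ℝ)) = (-β) * (m:ℝ) by ring, Real.rpow_mul h30.le,
        Real.rpow_natCast]
    have h2 : ∑ n ∈ Finset.range (m+1), (3:ℝ)^(-(β*((m:ℝ)-(n:ℝ)))) * τ n = E m := by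
      rw [hEdef]
      apply Finset.sum_congr rfl
      intro n hn
      have hnm : n ≤ m := by
        have := Finset.mem_range.mp hn; omega
      congr 1
      rw [hθdef, show -(β*((m:ℝ)-(n:ℝ))) = (-β) * (((m - n : ℕ) : ℝ)) by
        rw [Nat.cast_sub hnm]; ring, Real.rpow_mul h30.le, Real.rpow_natCast]
    have h3 := hbound m
    rw [h1, h2] at h3
    refine h3.trans ?_
    rw [hK₁def]
    exact mul_le_mul_of_nonneg_right (le_max_left K 1)
      (add_nonneg (pow_nonneg hθ0.le m) (hE0 m))
  -- telescoping
  have htele : ∀ a k : ℕ, c * (∑ n ∈ Finset.Ico a (a+k), τ n) ≤ F a - F (a+k) := by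
    intro a k
    rw [Finset.mul_sum]
    have h1 : ∑ n ∈ Finset.Ico a (a+k), c * τ n
        ≤ ∑ n ∈ Finset.Ico a (a+k), (F n - F (n+1)) :=
      Finset.sum_le_sum (fun n _ => hdiff n)
    refine h1.trans_eq ?_
    rw [Finset.sum_Ico_eq_sum_range]
    simp only [Nat.add_sub_cancel_left]
    exact Finset.sum_range_sub' (fun i => F (a+i)) k
  -- block estimate for E
  have hEblock : ∀ m k : ℕ, c * E (m+k) ≤ c * (θ^k * E m) + (F (m+1) - F (m+k+1)) := by
    intro m k
    have hsplit : E (m+k) = θ^k * E m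
        + ∑ n ∈ Finset.Ico (m+1) (m+k+1), θ^(m+k-n) * τ n := by
      rw [hEdef]
      simp only []
      rw [Finset.range_eq_Ico,
        ← Finset.sum_Ico_consecutive _ (Nat.zero_le (m+1)) (by omega : m+1 ≤ m+k+1)]
      congr 1
      rw [← Finset.range_eq_Ico, Finset.mul_sum]
      apply Finset.sum_congr rfl
      intro n hn
      have hnm : n ≤ m := by have := Finset.mem_range.mp hn; omega
      rw [show m+k-n = k+(m-n) by omega, pow_add]
      ring
    have h2 : ∑ n ∈ Finset.Ico (m+1) (m+k+1), θ^(m+k-n) * τ n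
        ≤ ∑ n ∈ Finset.Ico (m+1) (m+k+1), τ n := by
      apply Finset.sum_le_sum
      intro n _
      calc θ^(m+k-n) * τ n ≤ 1 * τ n :=
            mul_le_mul_of_nonneg_right (hθpow1 _) (hτ n)
        _ = τ n := one_mul _
    have h3 := htele (m+1) k
    rw [show m+1+k = m+k+1 by omega] at h3
    have h4 : c * (∑ n ∈ Finset.Ico (m+1) (m+k+1), θ^(m+k-n) * τ n)
        ≤ F (m+1) - F (m+k+1) :=
      le_trans (mul_le_mul_of_nonneg_left h2 hc.le) h3
    calc c * E (m+k)
        = c * (θ^k * E m) + c * (∑ n ∈ Finset.Ico (m+1) (m+k+1), θ^(m+k-n) * τ n) := by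
          rw [hsplit]; ring
      _ ≤ _ := by linarith
  -- uniform bound on c * E m
  have hEboundK : ∀ m, c * E m ≤ K₁ := by
    intro m
    have h1 : E m ≤ ∑ n ∈ Finset.range (m+1), τ n := by
      rw [hEdef]
      apply Finset.sum_le_sum
      intro n _
      calc θ^(m-n) * τ n ≤ 1 * τ n :=
            mul_le_mul_of_nonneg_right (hθpow1 _) (hτ n)
        _ = τ n := one_mul _
    have h2 := htele 0 (m+1)
    rw [show (0:ℕ)+(m+1) = m+1 by omega] at h2
    rw [show Finset.Ico 0 (m+1) = Finset.range (m+1) by rw [Finset.range_eq_Ico]] at h2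
    have h4 := hF (m+1)
    nlinarith [mul_le_mul_of_nonneg_left h1 hc.le]
  -- contraction factor
  obtain ⟨ρ₁, hρ₁def⟩ : ∃ x : ℝ, x = (c + 2*K₁) / (2*(c+K₁)) := ⟨_, rfl⟩
  have hcK : (0:ℝ) < c + K₁ := by linarith
  have hρ₁0 : 0 < ρ₁ := by
    rw [hρ₁def]; positivity
  have hρ₁1 : ρ₁ < 1 := by
    rw [hρ₁def, div_lt_one (by linarith)]; linarith
  have hρ₁half : (1:ℝ)/2 ≤ ρ₁ := by
    rw [hρ₁def, div_le_div_iff₀ (by norm_num) (by linarith)]; linarith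
  have hρ₁eq : ρ₁ * (c + K₁) = K₁ + c/2 := by
    rw [hρ₁def]; field_simp; ring
  -- choose L
  obtain ⟨L, hL⟩ := exists_pow_lt_of_lt_one
    (show (0:ℝ) < (ρ₁*(c/2)) / (K₁ + c/2) from
      div_pos (mul_pos hρ₁0 (by linarith)) (by linarith)) hθ1
  have hLcond : (K₁ + c/2) * θ^L ≤ ρ₁*(c/2) := by
    have h := (lt_div_iff₀ (show (0:ℝ) < K₁ + c/2 by linarith)).mp hL
    nlinarith [h]
  -- multiplied key estimate
  have hmul : ∀ m, (c + K₁) * F (m+L+1)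
      ≤ K₁ * F m + (c*K₁)*(θ^L * E m) + (c*K₁)*θ^m := by
    intro m
    have w1 : F (m+L+1) ≤ F (m+L) := hmono (m+L)
    have w2 := hFE (m+L)
    have w3 := hEblock m L
    have w4 : θ^(m+L) ≤ θ^m := by
      calc θ^(m+L) = θ^m * θ^L := pow_add θ m L
        _ ≤ θ^m * 1 := mul_le_mul_of_nonneg_left (hθpow1 L) (pow_nonneg hθ0.le m)
        _ = θ^m := mul_one _
    have p1 : c * F (m+L+1) ≤ c * (K₁ * (θ^(m+L) + E (m+L))) :=
      mul_le_mul_of_nonneg_left (w1.trans w2) hc.le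
    have p2 : K₁ * (c * E (m+L))
        ≤ K₁ * (c * (θ^L * E m) + (F (m+1) - F (m+L+1))) :=
      mul_le_mul_of_nonneg_left w3 hK₁0.le
    have p3 : (c*K₁) * θ^(m+L) ≤ (c*K₁) * θ^m :=
      mul_le_mul_of_nonneg_left w4 (by positivity)
    have p4 : K₁ * F (m+1) ≤ K₁ * F m :=
      mul_le_mul_of_nonneg_left (hmono m) hK₁0.le
    linarith [p1, p2, p3, p4]
  -- E block simplified
  have hEstep : ∀ m, c * E (m+L+1) ≤ c * (θ^L * E m) + F m := by
    intro m
    have w3 := hEblock m (L+1)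
    rw [show m+(L+1) = m+L+1 by omega] at w3
    have hp : θ^(L+1) ≤ θ^L := by
      calc θ^(L+1) = θ^L * θ := pow_succ θ L
        _ ≤ θ^L * 1 := mul_le_mul_of_nonneg_left hθ1.le (pow_nonneg hθ0.le L)
        _ = θ^L := mul_one _
    have h5 : c * (θ^(L+1) * E m) ≤ c * (θ^L * E m) :=
      mul_le_mul_of_nonneg_left
        (mul_le_mul_of_nonneg_right hp (hE0 m)) hc.le
    have h6 : F (m+1) ≤ F m := hmono m
    have h7 : 0 ≤ F (m+L+1+1) := hF _
    linarith
  -- the Lyapunov functional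
  obtain ⟨G, hGdef⟩ : ∃ g : ℕ → ℝ, g = fun m => (c+K₁) * F m + (c/2) * (c * E m) := ⟨_, rfl⟩
  have hGrec : ∀ m, G (m+L+1) ≤ ρ₁ * G m + (c*K₁) * θ^m := by
    intro m
    have q1 := hmul m
    have q2 : (c/2) * (c * E (m+L+1)) ≤ (c/2) * (c * (θ^L * E m) + F m) :=
      mul_le_mul_of_nonneg_left (hEstep m) (by positivity)
    have q3 : ((K₁ + c/2) * θ^L) * (c * E m) ≤ (ρ₁*(c/2)) * (c * E m) :=
      mul_le_mul_of_nonneg_right hLcond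
        (mul_nonneg hc.le (hE0 m))
    have q4 : ρ₁ * ((c+K₁) * F m) = (K₁ + c/2) * F m := by
      rw [← mul_assoc, hρ₁eq]
    rw [hGdef]
    simp only []
    linarith [q1, q2, q3, q4]
  have hGF : ∀ m, F m ≤ G m := by
    intro m
    rw [hGdef]
    simp only []
    have h1 : 0 ≤ (c/2) * (c * E m) :=
      mul_nonneg (by linarith) (mul_nonneg hc.le (hE0 m))
    have h2 : 0 ≤ (c + K₁ - 1) * F m :=
      mul_nonneg (by linarith) (hF m)
    nlinarith [h1, h2]
  obtain ⟨B, hBdef⟩ : ∃ x : ℝ, x = (c+K₁) * K₁ + (c/2) * K₁ := ⟨_, rfl⟩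
  have hB0 : 0 ≤ B := by rw [hBdef]; positivity
  have hGbase : ∀ r, G r ≤ B := by
    intro r
    rw [hGdef, hBdef]
    simp only []
    have h1 : F r ≤ K₁ := le_trans (hFanti 0 r (Nat.zero_le r)) hF0'
    have h2 : c * E r ≤ K₁ := hEboundK r
    have h3 : (c+K₁) * F r ≤ (c+K₁) * K₁ := mul_le_mul_of_nonneg_left h1 hcK.le
    have h4 : (c/2) * (c * E r) ≤ (c/2) * K₁ :=
      mul_le_mul_of_nonneg_left h2 (by linarith)
    linarith [h3, h4]
  -- geometric rate
  obtain ⟨q, hqdef⟩ : ∃ x : ℝ, x = θ^(L+1) := ⟨_, rfl⟩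
  have hq0 : 0 < q := hqdef ▸ pow_pos hθ0 _
  have hq1 : q < 1 := hqdef ▸ pow_lt_one₀ hθ0.le hθ1 (by omega)
  obtain ⟨M, hMdef⟩ : ∃ x : ℝ, x = max ρ₁ q := ⟨_, rfl⟩
  have hM1 : M < 1 := hMdef ▸ max_lt hρ₁1 hq1
  have hM0 : 0 < M := hMdef ▸ lt_max_of_lt_left hρ₁0
  obtain ⟨η, hηdef⟩ : ∃ x : ℝ, x = (1 + M)/2 := ⟨_, rfl⟩
  have hη0 : 0 < η := by rw [hηdef]; linarith
  have hη1 : η < 1 := by rw [hηdef]; linarith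
  have hρ₁η : ρ₁ ≤ η := by
    have : ρ₁ ≤ M := hMdef ▸ le_max_left _ _
    rw [hηdef]; linarith
  have hqη : q ≤ η := by
    have : q ≤ M := hMdef ▸ le_max_right _ _
    rw [hηdef]; linarith
  have hηρ₁ : 0 < η - ρ₁ := by
    have : ρ₁ ≤ M := hMdef ▸ le_max_left _ _
    rw [hηdef]; linarith
  obtain ⟨A, hAdef⟩ : ∃ x : ℝ, x = B + (c*K₁)/(η - ρ₁) := ⟨_, rfl⟩
  have hA0 : 0 ≤ A := by
    rw [hAdef]
    have : 0 ≤ (c*K₁)/(η - ρ₁) := div_nonneg (mul_nonneg hc.le hK₁0.le) hηρ₁.le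
    linarith
  have hAcond : ρ₁ * A + c*K₁ ≤ η * A := by
    rw [hAdef]
    have h1 : (η - ρ₁) * ((c*K₁)/(η - ρ₁)) = c*K₁ :=
      mul_div_cancel₀ _ (ne_of_gt hηρ₁)
    have h2 : 0 ≤ (η - ρ₁) * B := mul_nonneg hηρ₁.le hB0
    linarith [h1, h2]
  -- induction along blocks
  have hind : ∀ r, r < L+1 → ∀ j, G (j*(L+1) + r) ≤ A * η^j := by
    intro r hr j
    induction j with
    | zero =>
      rw [show 0*(L+1) + r = r by omega, pow_zero, mul_one]
      exact le_trans (hGbase r) (by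
        rw [hAdef]
        linarith [div_nonneg (mul_nonneg hc.le hK₁0.le) hηρ₁.le])
    | succ j ih =>
      have hidx : (j+1)*(L+1) + r = (j*(L+1) + r) + L + 1 := by ring
      rw [hidx]
      have h1 := hGrec (j*(L+1) + r)
      have hθη : θ^(j*(L+1) + r) ≤ η^j := by
        calc θ^(j*(L+1) + r) = θ^(j*(L+1)) * θ^r := pow_add θ _ _
          _ ≤ θ^(j*(L+1)) * 1 :=
            mul_le_mul_of_nonneg_left (hθpow1 r) (pow_nonneg hθ0.le _)
          _ = θ^(j*(L+1)) := mul_one _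
          _ = q^j := by rw [hqdef, mul_comm j (L+1), pow_mul]
          _ ≤ η^j := pow_le_pow_left₀ hq0.le hqη j
      have h2 : (c*K₁) * θ^(j*(L+1)+r) ≤ (c*K₁) * η^j :=
        mul_le_mul_of_nonneg_left hθη (by positivity)
      have h3 : ρ₁ * G (j*(L+1)+r) ≤ ρ₁ * (A * η^j) :=
        mul_le_mul_of_nonneg_left ih hρ₁0.le
      have h4 : (ρ₁ * A + c*K₁) * η^j ≤ (η * A) * η^j :=
        mul_le_mul_of_nonneg_right hAcond (pow_nonneg hη0.le j)
      calc G ((j*(L+1)+r) + L + 1) ≤ ρ₁ * G (j*(L+1)+r) + (c*K₁) * θ^(j*(L+1)+r) := h1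
        _ ≤ ρ₁ * (A * η^j) + (c*K₁) * η^j := by linarith
        _ = (ρ₁ * A + c*K₁) * η^j := by ring
        _ ≤ (η * A) * η^j := h4
        _ = A * η^(j+1) := by rw [pow_succ]; ring
  -- conclude
  have hlogη : Real.log η < 0 := Real.log_neg hη0 hη1
  have hlog3 : 0 < Real.log 3 := Real.log_pos (by norm_num)
  have hL1pos : (0:ℝ) < (L:ℝ)+1 := by positivity
  refine ⟨(-Real.log η) / (((L:ℝ)+1) * Real.log 3), A / η, ?_, ?_, ?_⟩
  · exact div_pos (by linarith) (by positivity)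
  · exact div_nonneg hA0 hη0.le
  · intro m
    obtain ⟨j, hjdef⟩ : ∃ x : ℕ, x = m / (L+1) := ⟨_, rfl⟩
    obtain ⟨r, hrdef⟩ : ∃ x : ℕ, x = m % (L+1) := ⟨_, rfl⟩
    have hdm := Nat.div_add_mod m (L+1)
    rw [← hjdef, ← hrdef] at hdm
    have hmj : j*(L+1) + r = m := by rw [mul_comm]; exact hdm
    have hr : r < L+1 := hrdef ▸ Nat.mod_lt _ (by omega)
    have h5 : F m ≤ A * η^j := by
      have := hind r hr j
      rw [hmj] at this
      exact le_trans (hGF m) this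
    -- rewrite the rpow
    have hαm : (3:ℝ) ^ (-(((-Real.log η) / (((L:ℝ)+1) * Real.log 3))*(m:ℝ)))
        = Real.exp ((m:ℝ) * Real.log η / ((L:ℝ)+1)) := by
      rw [Real.rpow_def_of_pos h30]
      congr 1
      field_simp
    have hηj : (η:ℝ)^j = Real.exp ((j:ℝ) * Real.log η) := by
      rw [← Real.log_pow, Real.exp_log (pow_pos hη0 j)]
    have h1 : (m:ℝ) ≤ ((j:ℝ)+1)*((L:ℝ)+1) := by
      have hrc : (r:ℝ) ≤ (L:ℝ)+1 := by exact_mod_cast hr.le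
      have hmr : (m:ℝ) = (j:ℝ)*((L:ℝ)+1) + (r:ℝ) := by
        rw [← hmj]; push_cast; ring
      have hexp : ((j:ℝ)+1)*((L:ℝ)+1) = (j:ℝ)*((L:ℝ)+1) + ((L:ℝ)+1) := by ring
      linarith [hmr, hrc, hexp]
    have hj : (m:ℝ)/((L:ℝ)+1) - 1 ≤ (j:ℝ) := by
      rw [sub_le_iff_le_add, div_le_iff₀ hL1pos]
      linarith [h1]
    have h3 : (j:ℝ)*Real.log η ≤ ((m:ℝ)/((L:ℝ)+1) - 1)*Real.log η :=
      mul_le_mul_of_nonpos_right hj hlogη.le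
    calc F m ≤ A * η^j := h5
      _ = A * Real.exp ((j:ℝ) * Real.log η) := by rw [hηj]
      _ ≤ A * Real.exp (((m:ℝ)/((L:ℝ)+1) - 1) * Real.log η) :=
        mul_le_mul_of_nonneg_left (Real.exp_le_exp.mpr h3) hA0
      _ = (A/η) * Real.exp ((m:ℝ) * Real.log η / ((L:ℝ)+1)) := by
        rw [show ((m:ℝ)/((L:ℝ)+1) - 1) * Real.log η
            = (m:ℝ) * Real.log η / ((L:ℝ)+1) + (-Real.log η) by field_simp; ring,
          Real.exp_add, Real.exp_neg, Real.exp_log hη0]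
        ring
      _ = (A/η) * (3:ℝ) ^ (-(((-Real.log η) / (((L:ℝ)+1) * Real.log 3))*(m:ℝ))) := by
        rw [hαm]
end
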